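/- Let C : ℝ → ℝ be differentiable and satisfy the parameter shift rule C'(θ) = (C(θ + π/2) − C(θ − π/2))/2 for all θ, and be 2π-periodic. If θ uniform on [0,2π] gives Var_θ[C(θ + π) − C(θ)] ≤ G, then Var_θ[C'(θ)] ≤ G/4. -/

import Mathlib

open MeasureTheory ProbabilityTheory Real

/-- The uniform probability measure on `[0, 2π]`. -/
noncomputable def unifCircle : Measure ℝ :=
  (ENNReal.ofReal (2 * π))⁻¹ • volume.restrict (Set.Icc 0 (2 * π))

/-!
By the parameter shift rule, `C'(θ) = D(θ - π/2) / 2` with `D(θ) = C(θ + π) - C(θ)`.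
Since `D` is `2π`-periodic, translating the argument does not change its distribution under the
uniform measure on a period, so `Var[C'] = Var[D] / 4`.
-/

theorem Function.Periodic.deriv {f : ℝ → ℝ} {T : ℝ} (hf : Function.Periodic f T) :
    Function.Periodic (deriv f) T := fun x => by
  rw [← deriv_comp_add_const, show (fun y => f (y + T)) = f from funext hf]

theorem integral_unifCircle_comp_add_right {g : ℝ → ℝ} (hg : Function.Periodic g (2 * π))
    (c : ℝ) : ∫ θ, g (θ + c) ∂unifCircle = ∫ θ, g θ ∂unifCircle := by
  have h2π : (0 : ℝ) ≤ 2 * π := by positivity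
  simp only [unifCircle, integral_smul_measure, integral_Icc_eq_integral_Ioc,
    ← intervalIntegral.integral_of_le h2π, intervalIntegral.integral_comp_add_right g c]
  rw [zero_add, add_comm, hg.intervalIntegral_add_eq c 0, zero_add]

-- No integrability hypothesis: both sides are `0` (junk) unless `g` is square integrable.
theorem variance_unifCircle_comp_add_right {g : ℝ → ℝ} (hg_meas : Measurable g)
    (hg : Function.Periodic g (2 * π)) (c : ℝ) :
    variance (fun θ => g (θ + c)) unifCircle = variance g unifCircle := by
  have hsq : Function.Periodic (fun θ => (g θ - ∫ θ, g θ ∂unifCircle) ^ 2) (2 * π) :=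
    fun θ => by simp only [hg θ]
  have hg_shift_meas : Measurable fun θ => g (θ + c) := by fun_prop
  rw [variance_eq_integral hg_shift_meas.aemeasurable,
    variance_eq_integral hg_meas.aemeasurable, integral_unifCircle_comp_add_right hg,
    integral_unifCircle_comp_add_right hsq]

theorem variance_deriv_le_of_variance_diff_le_general
    (C : ℝ → ℝ) (hper : Function.Periodic C (2 * π))
    (hPSR : ∀ θ : ℝ, deriv C θ = (C (θ + π / 2) - C (θ - π / 2)) / 2)
    (G : ℝ)
    (hG : variance (fun θ => C (θ + π) - C θ) unifCircle ≤ G) :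
    variance (fun θ => deriv C θ) unifCircle ≤ G / 4 := by
  have hdiff : (fun θ => C (θ + π) - C θ) = fun θ => 2 * deriv C (θ + π / 2) := by
    funext θ
    rw [hPSR]
    ring_nf
  have hvar : variance (fun θ => C (θ + π) - C θ) unifCircle
      = 4 * variance (fun θ => deriv C θ) unifCircle := by
    rw [hdiff, variance_const_mul,
      variance_unifCircle_comp_add_right (measurable_deriv C) hper.deriv]
    norm_num
  linarith

/-- Cost concentration implies barren plateaus: if a differentiable `2π`-periodic cost
satisfies the parameter shift rule and the variance of the difference `C(θ+π) - C(θ)`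
over uniform `θ` is at most `G`, then the variance of the derivative is at most `G/4`. -/
theorem variance_deriv_le_of_variance_diff_le
    (C : ℝ → ℝ) (hC : Differentiable ℝ C) (hper : Function.Periodic C (2 * π))
    (hPSR : ∀ θ : ℝ, deriv C θ = (C (θ + π / 2) - C (θ - π / 2)) / 2)
    (G : ℝ)
    (hG : variance (fun θ => C (θ + π) - C θ) unifCircle ≤ G) :
    variance (fun θ => deriv C θ) unifCircle ≤ G / 4 :=
  variance_deriv_le_of_variance_diff_le_general C hper hPSR G hG
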